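/- The naive subcontracting relation ⊑* is a preorder on contracts: for all contracts C, C', D, one has C ⊑* C (reflexivity), and if C ⊑* C' and C' ⊑* D then C ⊑* D (transitivity), provided the underlying predicate-implication relation ≤ of the environment Γ is transitive. -/
import Mathlib


namespace LambdaCon

/-- First-order constants. -/
inductive Const : Type
  | bool : Bool → Const
  | num  : Nat → Const
deriving DecidableEq

/-- Blame identifiers: source-level blame labels ♭ and blame variables ι. -/
inductive BlameId : Type
  | lbl : Nat → BlameId
  | var : Nat → BlameId
deriving DecidableEq

mutual
  /-- Terms of λCon (with the intermediate and subset-level extensions). -/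
  inductive Term : Type
    | const      : Const → Term
    | var        : String → Term
    | lam        : String → Term → Term
    | app        : Term → Term → Term
    | op         : String → Term → Term → Term
    | ite        : Term → Term → Term → Term
    | assert     : Term → BlameId → Contract → Term          -- M @b C
    | evalAssert : Term → Nat → Term → Term                  -- V @ι (eval M)
    | blame      : Nat → Term                                -- blame^♭
    | posBlame   : Nat → Term                                -- +blame^♭
    | negBlame   : Nat → Term                                -- −blame^♭
    | par        : Term → Term → Term                        -- parallel observation M || N

  /-- Contracts. -/
  inductive Contract : Type
    | flat  : Term → Contract
    | fn    : Contract → Contract → Contract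
    | dep   : String → Contract → Contract
    | inter : Contract → Contract → Contract
    | union : Contract → Contract → Contract
    | top   : Contract
    | bot   : Contract
end

mutual
  def beqT : Term → Term → Bool
    | .const k, .const k' => k == k'
    | .var x, .var y => x == y
    | .lam x M, .lam y N => x == y && beqT M N
    | .app a b, .app c d => beqT a c && beqT b d
    | .op o a b, .op o' c d => o == o' && beqT a c && beqT b d
    | .ite a b c, .ite d e f => beqT a d && beqT b e && beqT c f
    | .assert M b C, .assert N b' D => beqT M N && (b == b') && beqC C D
    | .evalAssert V i M, .evalAssert W j N => beqT V W && (i == j) && beqT M N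
    | .blame l, .blame l' => l == l'
    | .posBlame l, .posBlame l' => l == l'
    | .negBlame l, .negBlame l' => l == l'
    | .par a b, .par c d => beqT a c && beqT b d
    | _, _ => false
  def beqC : Contract → Contract → Bool
    | .flat M, .flat N => beqT M N
    | .fn a b, .fn c d => beqC a c && beqC b d
    | .dep x C, .dep y D => x == y && beqC C D
    | .inter a b, .inter c d => beqC a c && beqC b d
    | .union a b, .union c d => beqC a c && beqC b d
    | .top, .top => true
    | .bot, .bot => true
    | _, _ => false
end

instance : BEq Term := ⟨beqT⟩
instance : BEq Contract := ⟨beqC⟩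

mutual
  /-- Capture-permitting substitution M[x ↦ N] on terms. -/
  def substT : Term → String → Term → Term
    | .const k, _, _ => .const k
    | .var y, x, N => if y = x then N else .var y
    | .lam y M, x, N => if y = x then .lam y M else .lam y (substT M x N)
    | .app M₁ M₂, x, N => .app (substT M₁ x N) (substT M₂ x N)
    | .op o M₁ M₂, x, N => .op o (substT M₁ x N) (substT M₂ x N)
    | .ite L M₁ M₂, x, N => .ite (substT L x N) (substT M₁ x N) (substT M₂ x N)
    | .assert M b C, x, N => .assert (substT M x N) b (substC C x N)
    | .evalAssert V ι M, x, N => .evalAssert (substT V x N) ι (substT M x N)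
    | .blame ℓ, _, _ => .blame ℓ
    | .posBlame ℓ, _, _ => .posBlame ℓ
    | .negBlame ℓ, _, _ => .negBlame ℓ
    | .par M₁ M₂, x, N => .par (substT M₁ x N) (substT M₂ x N)
  /-- Substitution C[x ↦ N] on contracts. -/
  def substC : Contract → String → Term → Contract
    | .flat M, x, N => .flat (substT M x N)
    | .fn C D, x, N => .fn (substC C x N) (substC D x N)
    | .dep y C, x, N => if y = x then .dep y C else .dep y (substC C x N)
    | .inter C D, x, N => .inter (substC C x N) (substC D x N)
    | .union C D, x, N => .union (substC C x N) (substC D x N)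
    | .top, _, _ => .top
    | .bot, _, _ => .bot
end

mutual
  /-- Free variables of a term. -/
  def fvT : Term → List String
    | .const _ => []
    | .var y => [y]
    | .lam y M => (fvT M).filter (· ≠ y)
    | .app M₁ M₂ => fvT M₁ ++ fvT M₂
    | .op _ M₁ M₂ => fvT M₁ ++ fvT M₂
    | .ite L M₁ M₂ => fvT L ++ fvT M₁ ++ fvT M₂
    | .assert M _ C => fvT M ++ fvC C
    | .evalAssert V _ M => fvT V ++ fvT M
    | .blame _ => []
    | .posBlame _ => []
    | .negBlame _ => []
    | .par M₁ M₂ => fvT M₁ ++ fvT M₂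
  def fvC : Contract → List String
    | .flat M => fvT M
    | .fn C D => fvC C ++ fvC D
    | .dep y C => (fvC C).filter (· ≠ y)
    | .inter C D => fvC C ++ fvC D
    | .union C D => fvC C ++ fvC D
    | .top => []
    | .bot => []
end

/-- A term is closed if it has no free variables. -/
def Closed (M : Term) : Prop := fvT M = []

/-- Delayed contracts Q: function, dependent, and intersections thereof. -/
inductive Delayed : Contract → Prop
  | fn    : ∀ C D, Delayed (.fn C D)
  | dep   : ∀ x C, Delayed (.dep x C)
  | inter : ∀ Q R, Delayed Q → Delayed R → Delayed (.inter Q R)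

/-- Immediate (flat) contracts I. -/
inductive Immediate : Contract → Prop
  | flat : ∀ M, Immediate (.flat M)

/-- Values of λCon. -/
inductive IsValue : Term → Prop
  | const  : ∀ k, IsValue (.const k)
  | lam    : ∀ x M, IsValue (.lam x M)
  | assert : ∀ V ι Q, IsValue V → Delayed Q → IsValue (.assert V (.var ι) Q)

/-- Erase all (delayed) contract monitors from a value. -/
def unwrap : Term → Term
  | .assert V _ _ => unwrap V
  | V => V

/-- Convert a value into a truth value (everything but `false` counts as true). -/
def truthOf : Term → Bool
  | .const (.bool b) => b
  | _ => true

end LambdaCon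
namespace LambdaCon

/-- Predicate-implication environments Γ: M ≤ N means predicate M implies N. -/
abbrev PredEnv := Term → Term → Prop

mutual
  /-- Context subcontracting C ⊑⁻ D: C restricts the context more than D. -/
  inductive CtxSub (Γ : PredEnv) : Contract → Contract → Prop
    | refl : ∀ C, CtxSub Γ C C
    | flat : ∀ M N, CtxSub Γ (.flat M) (.flat N)
    | fn : ∀ {CD CR DD DR}, SubjSub Γ CD DD → CtxSub Γ CR DR →
        CtxSub Γ (.fn CD CR) (.fn DD DR)
    | dep : ∀ {C D} x, CtxSub Γ C D → CtxSub Γ (.dep x C) (.dep x D)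
    | interL : ∀ {CL CR D}, CtxSub Γ CL D → CtxSub Γ CR D →
        CtxSub Γ (.inter CL CR) D
    | interR₁ : ∀ {C DL} DR, CtxSub Γ C DL → CtxSub Γ C (.inter DL DR)
    | interR₂ : ∀ {C DR} DL, CtxSub Γ C DR → CtxSub Γ C (.inter DL DR)
    | unionL₁ : ∀ {CL D} CR, CtxSub Γ CL D → CtxSub Γ (.union CL CR) D
    | unionL₂ : ∀ {CR D} CL, CtxSub Γ CR D → CtxSub Γ (.union CL CR) D
    | unionR : ∀ {C DL DR}, CtxSub Γ C DL → CtxSub Γ C DR →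
        CtxSub Γ C (.union DL DR)

  /-- Subject subcontracting C ⊑⁺ D: the subject obligations of C are more
      restrictive than those of D. -/
  inductive SubjSub (Γ : PredEnv) : Contract → Contract → Prop
    | refl : ∀ C, SubjSub Γ C C
    | top : ∀ C, SubjSub Γ C .top
    | bot : ∀ D, SubjSub Γ .bot D
    | flat : ∀ {M N}, Γ M N → SubjSub Γ (.flat M) (.flat N)
    | fn : ∀ {CD CR DD DR}, CtxSub Γ CD DD → SubjSub Γ CR DR →
        SubjSub Γ (.fn CD CR) (.fn DD DR)
    | dep : ∀ {C D} x, SubjSub Γ C D → SubjSub Γ (.dep x C) (.dep x D)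
    | interL₁ : ∀ {CL D} CR, SubjSub Γ CL D → SubjSub Γ (.inter CL CR) D
    | interL₂ : ∀ {CR D} CL, SubjSub Γ CR D → SubjSub Γ (.inter CL CR) D
    | interR : ∀ {C DL DR}, SubjSub Γ C DL → SubjSub Γ C DR →
        SubjSub Γ C (.inter DL DR)
    | unionL : ∀ {CL CR D}, SubjSub Γ CL D → SubjSub Γ CR D →
        SubjSub Γ (.union CL CR) D
    | unionR₁ : ∀ {C DL} DR, SubjSub Γ C DL → SubjSub Γ C (.union DL DR)
    | unionR₂ : ∀ {C DR} DL, SubjSub Γ C DR → SubjSub Γ C (.union DL DR)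
end

/-- Naive subcontracting C ⊑* D: covariant for context and subject. -/
def NaiveSub (Γ : PredEnv) (C D : Contract) : Prop :=
  CtxSub Γ C D ∧ SubjSub Γ C D

/-- Ordinary subcontracting C ⊑ D: contravariant for the context portion and
    covariant for the subject portion. -/
def OrdSub (Γ : PredEnv) (C D : Contract) : Prop :=
  CtxSub Γ D C ∧ SubjSub Γ C D

end LambdaCon

namespace LambdaCon


/-- Generalized inversion/pushback for context subcontracting: if `C ⊑⁻ T`
and `R T D` holds for a relation `R` closed under the ways a derivation of
`C ⊑⁻ T` can analyze `T`, then `C ⊑⁻ D`. -/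
private theorem ctxPush (Γ : PredEnv) (R : Contract → Contract → Prop)
    (hbase : ∀ T D, R T D → CtxSub Γ T D)
    (hflat : ∀ N D, R (.flat N) D → ∀ M, CtxSub Γ (.flat M) D)
    (hfn : ∀ TD TR D, R (.fn TD TR) D → ∀ CD CR, SubjSub Γ CD TD →
        CtxSub Γ CR TR → CtxSub Γ (.fn CD CR) D)
    (hdep : ∀ x T D, R (.dep x T) D → ∀ C, CtxSub Γ C T → CtxSub Γ (.dep x C) D)
    (hiR1 : ∀ TL TR D, R (.inter TL TR) D → ∀ C, CtxSub Γ C TL → CtxSub Γ C D)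
    (hiR2 : ∀ TL TR D, R (.inter TL TR) D → ∀ C, CtxSub Γ C TR → CtxSub Γ C D)
    (huR : ∀ TL TR D, R (.union TL TR) D → ∀ C, CtxSub Γ C TL →
        CtxSub Γ C TR → CtxSub Γ C D)
    {C T} (h : CtxSub Γ C T) : ∀ D, R T D → CtxSub Γ C D := by
  refine CtxSub.rec (Γ := Γ)
    (motive_1 := fun C T _ => ∀ D, R T D → CtxSub Γ C D)
    (motive_2 := fun _ _ _ => True)
    ?_ ?_ ?_ ?_ ?_ ?_ ?_ ?_ ?_ ?_ ?_ ?_ ?_ ?_ ?_ ?_ ?_ ?_ ?_ ?_ ?_ ?_ h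
  all_goals try (intros; exact trivial)
  · exact hbase
  · intro M N D r; exact hflat N D r M
  · intro CD CR DD DR a a1 _ _ D r; exact hfn DD DR D r CD CR a a1
  · intro C T x a _ D r; exact hdep x T D r C a
  · intro CL CR T a a1 ihL ihR D r; exact .interL (ihL D r) (ihR D r)
  · intro C TL TR a _ D r; exact hiR1 TL TR D r C a
  · intro C TR TL a _ D r; exact hiR2 TL TR D r C a
  · intro CL T CR a ih D r; exact .unionL₁ CR (ih D r)
  · intro CR T CL a ih D r; exact .unionL₂ CL (ih D r)
  · intro C TL TR a a1 _ _ D r; exact huR TL TR D r C a a1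

/-- Generalized inversion/pushback for subject subcontracting. -/
private theorem subjPush (Γ : PredEnv) (R : Contract → Contract → Prop)
    (hbase : ∀ T D, R T D → SubjSub Γ T D)
    (htop : ∀ D, R .top D → ∀ C, SubjSub Γ C D)
    (hflat : ∀ N D, R (.flat N) D → ∀ M, Γ M N → SubjSub Γ (.flat M) D)
    (hfn : ∀ TD TR D, R (.fn TD TR) D → ∀ CD CR, CtxSub Γ CD TD →
        SubjSub Γ CR TR → SubjSub Γ (.fn CD CR) D)
    (hdep : ∀ x T D, R (.dep x T) D → ∀ C, SubjSub Γ C T → SubjSub Γ (.dep x C) D)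
    (hiR : ∀ TL TR D, R (.inter TL TR) D → ∀ C, SubjSub Γ C TL →
        SubjSub Γ C TR → SubjSub Γ C D)
    (huR1 : ∀ TL TR D, R (.union TL TR) D → ∀ C, SubjSub Γ C TL → SubjSub Γ C D)
    (huR2 : ∀ TL TR D, R (.union TL TR) D → ∀ C, SubjSub Γ C TR → SubjSub Γ C D)
    {C T} (h : SubjSub Γ C T) : ∀ D, R T D → SubjSub Γ C D := by
  refine SubjSub.rec (Γ := Γ)
    (motive_1 := fun _ _ _ => True)
    (motive_2 := fun C T _ => ∀ D, R T D → SubjSub Γ C D)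
    ?_ ?_ ?_ ?_ ?_ ?_ ?_ ?_ ?_ ?_ ?_ ?_ ?_ ?_ ?_ ?_ ?_ ?_ ?_ ?_ ?_ ?_ h
  all_goals try (intros; exact trivial)
  · exact hbase
  · intro C D r; exact htop D r C
  · intro T D _; exact .bot D
  · intro M N a D r; exact hflat N D r M a
  · intro CD CR DD DR a a1 _ _ D r; exact hfn DD DR D r CD CR a a1
  · intro C T x a _ D r; exact hdep x T D r C a
  · intro CL T CR a ih D r; exact .interL₁ CR (ih D r)
  · intro CR T CL a ih D r; exact .interL₂ CL (ih D r)
  · intro C TL TR a a1 _ _ D r; exact hiR TL TR D r C a a1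
  · intro CL CR T a a1 ihL ihR D r; exact .unionL (ihL D r) (ihR D r)
  · intro C TL TR a _ D r; exact huR1 TL TR D r C a
  · intro C TR TL a _ D r; exact huR2 TL TR D r C a


private theorem sub_trans (Γ : PredEnv)
    (hΓ : ∀ M N L, Γ M N → Γ N L → Γ M L) :
    (∀ C' D, CtxSub Γ C' D → ∀ C, CtxSub Γ C C' → CtxSub Γ C D) ∧
    (∀ C' D, SubjSub Γ C' D → ∀ C, SubjSub Γ C C' → SubjSub Γ C D) := by
  have c1 : ∀ (C' : Contract), ∀ C, CtxSub Γ C C' → CtxSub Γ C C' := fun _ _ h => h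
  have c2 : ∀ (M N : Term), ∀ C, CtxSub Γ C (.flat M) → CtxSub Γ C (.flat N) := by
    intro M N C h
    refine ctxPush Γ (fun T D => T = .flat M ∧ D = .flat N)
      ?_ ?_ ?_ ?_ ?_ ?_ ?_ h _ ⟨rfl, rfl⟩
    · rintro T D ⟨rfl, rfl⟩; exact .flat M N
    · rintro N' D ⟨-, rfl⟩ M'; exact .flat M' N
    · rintro TD TR D ⟨h', -⟩; injection h'
    · rintro x T D ⟨h', -⟩; injection h'
    · rintro TL TR D ⟨h', -⟩; injection h'
    · rintro TL TR D ⟨h', -⟩; injection h'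
    · rintro TL TR D ⟨h', -⟩; injection h'
  have c3 : ∀ {CD CR DD DR}, SubjSub Γ CD DD → CtxSub Γ CR DR →
      (∀ C, SubjSub Γ C CD → SubjSub Γ C DD) →
      (∀ C, CtxSub Γ C CR → CtxSub Γ C DR) →
      ∀ C, CtxSub Γ C (.fn CD CR) → CtxSub Γ C (.fn DD DR) := by
    intro CD CR DD DR a a1 ihS ihC C h
    refine ctxPush Γ (fun T D => T = .fn CD CR ∧ D = .fn DD DR)
      ?_ ?_ ?_ ?_ ?_ ?_ ?_ h _ ⟨rfl, rfl⟩
    · rintro T D ⟨rfl, rfl⟩; exact .fn a a1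
    · rintro N D ⟨h', -⟩; injection h'
    · rintro TD TR D ⟨h', rfl⟩ CD' CR' hS hC
      injection h' with e1 e2; subst e1; subst e2
      exact .fn (ihS _ hS) (ihC _ hC)
    · rintro x T D ⟨h', -⟩; injection h'
    · rintro TL TR D ⟨h', -⟩; injection h'
    · rintro TL TR D ⟨h', -⟩; injection h'
    · rintro TL TR D ⟨h', -⟩; injection h'
  have c4 : ∀ {C' D'} (x : String), CtxSub Γ C' D' →
      (∀ C, CtxSub Γ C C' → CtxSub Γ C D') →
      ∀ C, CtxSub Γ C (.dep x C') → CtxSub Γ C (.dep x D') := by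
    intro C' D' x a ih C h
    refine ctxPush Γ (fun T D => T = .dep x C' ∧ D = .dep x D')
      ?_ ?_ ?_ ?_ ?_ ?_ ?_ h _ ⟨rfl, rfl⟩
    · rintro T D ⟨rfl, rfl⟩; exact .dep x a
    · rintro N D ⟨h', -⟩; injection h'
    · rintro TD TR D ⟨h', -⟩; injection h'
    · rintro x' T D ⟨h', rfl⟩ C0 hC
      injection h' with e1 e2; subst e1; subst e2
      exact .dep _ (ih _ hC)
    · rintro TL TR D ⟨h', -⟩; injection h'
    · rintro TL TR D ⟨h', -⟩; injection h'
    · rintro TL TR D ⟨h', -⟩; injection h'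
  have c5 : ∀ {CL CR D}, CtxSub Γ CL D → CtxSub Γ CR D →
      (∀ C, CtxSub Γ C CL → CtxSub Γ C D) →
      (∀ C, CtxSub Γ C CR → CtxSub Γ C D) →
      ∀ C, CtxSub Γ C (.inter CL CR) → CtxSub Γ C D := by
    intro CL CR D a a1 ihL ihR C h
    refine ctxPush Γ (fun T D₀ => T = .inter CL CR ∧ D₀ = D)
      ?_ ?_ ?_ ?_ ?_ ?_ ?_ h _ ⟨rfl, rfl⟩
    · rintro T D₀ ⟨rfl, rfl⟩; exact .interL a a1
    · rintro N D₀ ⟨h', -⟩; injection h'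
    · rintro TD TR D₀ ⟨h', -⟩; injection h'
    · rintro x T D₀ ⟨h', -⟩; injection h'
    · rintro TL TR D₀ ⟨h', rfl⟩ C0 hC
      injection h' with e1 e2; subst e1; exact ihL _ hC
    · rintro TL TR D₀ ⟨h', rfl⟩ C0 hC
      injection h' with e1 e2; subst e2; exact ihR _ hC
    · rintro TL TR D₀ ⟨h', -⟩; injection h'
  have c6 : ∀ {C' DL} (DR : Contract), CtxSub Γ C' DL →
      (∀ C, CtxSub Γ C C' → CtxSub Γ C DL) →
      ∀ C, CtxSub Γ C C' → CtxSub Γ C (.inter DL DR) :=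
    fun DR _ ih C h => .interR₁ DR (ih C h)
  have c7 : ∀ {C' DR} (DL : Contract), CtxSub Γ C' DR →
      (∀ C, CtxSub Γ C C' → CtxSub Γ C DR) →
      ∀ C, CtxSub Γ C C' → CtxSub Γ C (.inter DL DR) :=
    fun DL _ ih C h => .interR₂ DL (ih C h)
  have c8 : ∀ {CL D} (CR : Contract), CtxSub Γ CL D →
      (∀ C, CtxSub Γ C CL → CtxSub Γ C D) →
      ∀ C, CtxSub Γ C (.union CL CR) → CtxSub Γ C D := by
    intro CL D CR a ih C h
    refine ctxPush Γ (fun T D₀ => T = .union CL CR ∧ D₀ = D)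
      ?_ ?_ ?_ ?_ ?_ ?_ ?_ h _ ⟨rfl, rfl⟩
    · rintro T D₀ ⟨rfl, rfl⟩; exact .unionL₁ CR a
    · rintro N D₀ ⟨h', -⟩; injection h'
    · rintro TD TR D₀ ⟨h', -⟩; injection h'
    · rintro x T D₀ ⟨h', -⟩; injection h'
    · rintro TL TR D₀ ⟨h', -⟩; injection h'
    · rintro TL TR D₀ ⟨h', -⟩; injection h'
    · rintro TL TR D₀ ⟨h', rfl⟩ C0 hL hR
      injection h' with e1 e2; subst e1; exact ih _ hL
  have c9 : ∀ {CR D} (CL : Contract), CtxSub Γ CR D →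
      (∀ C, CtxSub Γ C CR → CtxSub Γ C D) →
      ∀ C, CtxSub Γ C (.union CL CR) → CtxSub Γ C D := by
    intro CR D CL a ih C h
    refine ctxPush Γ (fun T D₀ => T = .union CL CR ∧ D₀ = D)
      ?_ ?_ ?_ ?_ ?_ ?_ ?_ h _ ⟨rfl, rfl⟩
    · rintro T D₀ ⟨rfl, rfl⟩; exact .unionL₂ CL a
    · rintro N D₀ ⟨h', -⟩; injection h'
    · rintro TD TR D₀ ⟨h', -⟩; injection h'
    · rintro x T D₀ ⟨h', -⟩; injection h'
    · rintro TL TR D₀ ⟨h', -⟩; injection h'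
    · rintro TL TR D₀ ⟨h', -⟩; injection h'
    · rintro TL TR D₀ ⟨h', rfl⟩ C0 hL hR
      injection h' with e1 e2; subst e2; exact ih _ hR
  have c10 : ∀ {C' DL DR}, CtxSub Γ C' DL → CtxSub Γ C' DR →
      (∀ C, CtxSub Γ C C' → CtxSub Γ C DL) →
      (∀ C, CtxSub Γ C C' → CtxSub Γ C DR) →
      ∀ C, CtxSub Γ C C' → CtxSub Γ C (.union DL DR) :=
    fun _ _ ih1 ih2 C h => .unionR (ih1 C h) (ih2 C h)
  have s1 : ∀ (C' : Contract), ∀ C, SubjSub Γ C C' → SubjSub Γ C C' := fun _ _ h => h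
  have s2 : ∀ (C' : Contract), ∀ C, SubjSub Γ C C' → SubjSub Γ C .top :=
    fun _ C _ => .top C
  have s3 : ∀ (D : Contract), ∀ C, SubjSub Γ C .bot → SubjSub Γ C D := by
    intro D C h
    refine subjPush Γ (fun T D₀ => T = .bot ∧ D₀ = D)
      ?_ ?_ ?_ ?_ ?_ ?_ ?_ ?_ h _ ⟨rfl, rfl⟩
    · rintro T D₀ ⟨rfl, rfl⟩; exact .bot _
    · rintro D₀ ⟨h', -⟩; injection h'
    · rintro N D₀ ⟨h', -⟩; injection h'
    · rintro TD TR D₀ ⟨h', -⟩; injection h'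
    · rintro x T D₀ ⟨h', -⟩; injection h'
    · rintro TL TR D₀ ⟨h', -⟩; injection h'
    · rintro TL TR D₀ ⟨h', -⟩; injection h'
    · rintro TL TR D₀ ⟨h', -⟩; injection h'
  have s4 : ∀ {M N : Term}, Γ M N →
      ∀ C, SubjSub Γ C (.flat M) → SubjSub Γ C (.flat N) := by
    intro M N hMN C h
    refine subjPush Γ (fun T D₀ => T = .flat M ∧ D₀ = Contract.flat N)
      ?_ ?_ ?_ ?_ ?_ ?_ ?_ ?_ h _ ⟨rfl, rfl⟩
    · rintro T D₀ ⟨rfl, rfl⟩; exact .flat hMN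
    · rintro D₀ ⟨h', -⟩; injection h'
    · rintro M₂ D₀ ⟨h', rfl⟩ M₁ h12
      injection h' with e; subst e; exact .flat (hΓ _ _ _ h12 hMN)
    · rintro TD TR D₀ ⟨h', -⟩; injection h'
    · rintro x T D₀ ⟨h', -⟩; injection h'
    · rintro TL TR D₀ ⟨h', -⟩; injection h'
    · rintro TL TR D₀ ⟨h', -⟩; injection h'
    · rintro TL TR D₀ ⟨h', -⟩; injection h'
  have s5 : ∀ {CD CR DD DR}, CtxSub Γ CD DD → SubjSub Γ CR DR →
      (∀ C, CtxSub Γ C CD → CtxSub Γ C DD) →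
      (∀ C, SubjSub Γ C CR → SubjSub Γ C DR) →
      ∀ C, SubjSub Γ C (.fn CD CR) → SubjSub Γ C (.fn DD DR) := by
    intro CD CR DD DR a a1 ihC ihS C h
    refine subjPush Γ (fun T D₀ => T = .fn CD CR ∧ D₀ = .fn DD DR)
      ?_ ?_ ?_ ?_ ?_ ?_ ?_ ?_ h _ ⟨rfl, rfl⟩
    · rintro T D₀ ⟨rfl, rfl⟩; exact .fn a a1
    · rintro D₀ ⟨h', -⟩; injection h'
    · rintro N D₀ ⟨h', -⟩; injection h'
    · rintro TD TR D₀ ⟨h', rfl⟩ CD' CR' hC hS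
      injection h' with e1 e2; subst e1; subst e2
      exact .fn (ihC _ hC) (ihS _ hS)
    · rintro x T D₀ ⟨h', -⟩; injection h'
    · rintro TL TR D₀ ⟨h', -⟩; injection h'
    · rintro TL TR D₀ ⟨h', -⟩; injection h'
    · rintro TL TR D₀ ⟨h', -⟩; injection h'
  have s6 : ∀ {C' D'} (x : String), SubjSub Γ C' D' →
      (∀ C, SubjSub Γ C C' → SubjSub Γ C D') →
      ∀ C, SubjSub Γ C (.dep x C') → SubjSub Γ C (.dep x D') := by
    intro C' D' x a ih C h
    refine subjPush Γ (fun T D₀ => T = .dep x C' ∧ D₀ = .dep x D')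
      ?_ ?_ ?_ ?_ ?_ ?_ ?_ ?_ h _ ⟨rfl, rfl⟩
    · rintro T D₀ ⟨rfl, rfl⟩; exact .dep x a
    · rintro D₀ ⟨h', -⟩; injection h'
    · rintro N D₀ ⟨h', -⟩; injection h'
    · rintro TD TR D₀ ⟨h', -⟩; injection h'
    · rintro x' T D₀ ⟨h', rfl⟩ C0 hC
      injection h' with e1 e2; subst e1; subst e2
      exact .dep _ (ih _ hC)
    · rintro TL TR D₀ ⟨h', -⟩; injection h'
    · rintro TL TR D₀ ⟨h', -⟩; injection h'
    · rintro TL TR D₀ ⟨h', -⟩; injection h'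
  have s7 : ∀ {CL D} (CR : Contract), SubjSub Γ CL D →
      (∀ C, SubjSub Γ C CL → SubjSub Γ C D) →
      ∀ C, SubjSub Γ C (.inter CL CR) → SubjSub Γ C D := by
    intro CL D CR a ih C h
    refine subjPush Γ (fun T D₀ => T = .inter CL CR ∧ D₀ = D)
      ?_ ?_ ?_ ?_ ?_ ?_ ?_ ?_ h _ ⟨rfl, rfl⟩
    · rintro T D₀ ⟨rfl, rfl⟩; exact .interL₁ CR a
    · rintro D₀ ⟨h', -⟩; injection h'
    · rintro N D₀ ⟨h', -⟩; injection h'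
    · rintro TD TR D₀ ⟨h', -⟩; injection h'
    · rintro x T D₀ ⟨h', -⟩; injection h'
    · rintro TL TR D₀ ⟨h', rfl⟩ C0 hL hR
      injection h' with e1 e2; subst e1; exact ih _ hL
    · rintro TL TR D₀ ⟨h', -⟩; injection h'
    · rintro TL TR D₀ ⟨h', -⟩; injection h'
  have s8 : ∀ {CR D} (CL : Contract), SubjSub Γ CR D →
      (∀ C, SubjSub Γ C CR → SubjSub Γ C D) →
      ∀ C, SubjSub Γ C (.inter CL CR) → SubjSub Γ C D := by
    intro CR D CL a ih C h
    refine subjPush Γ (fun T D₀ => T = .inter CL CR ∧ D₀ = D)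
      ?_ ?_ ?_ ?_ ?_ ?_ ?_ ?_ h _ ⟨rfl, rfl⟩
    · rintro T D₀ ⟨rfl, rfl⟩; exact .interL₂ CL a
    · rintro D₀ ⟨h', -⟩; injection h'
    · rintro N D₀ ⟨h', -⟩; injection h'
    · rintro TD TR D₀ ⟨h', -⟩; injection h'
    · rintro x T D₀ ⟨h', -⟩; injection h'
    · rintro TL TR D₀ ⟨h', rfl⟩ C0 hL hR
      injection h' with e1 e2; subst e2; exact ih _ hR
    · rintro TL TR D₀ ⟨h', -⟩; injection h'
    · rintro TL TR D₀ ⟨h', -⟩; injection h'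
  have s9 : ∀ {C' DL DR}, SubjSub Γ C' DL → SubjSub Γ C' DR →
      (∀ C, SubjSub Γ C C' → SubjSub Γ C DL) →
      (∀ C, SubjSub Γ C C' → SubjSub Γ C DR) →
      ∀ C, SubjSub Γ C C' → SubjSub Γ C (.inter DL DR) :=
    fun _ _ ih1 ih2 C h => .interR (ih1 C h) (ih2 C h)
  have s10 : ∀ {CL CR D}, SubjSub Γ CL D → SubjSub Γ CR D →
      (∀ C, SubjSub Γ C CL → SubjSub Γ C D) →
      (∀ C, SubjSub Γ C CR → SubjSub Γ C D) →
      ∀ C, SubjSub Γ C (.union CL CR) → SubjSub Γ C D := by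
    intro CL CR D a a1 ihL ihR C h
    refine subjPush Γ (fun T D₀ => T = .union CL CR ∧ D₀ = D)
      ?_ ?_ ?_ ?_ ?_ ?_ ?_ ?_ h _ ⟨rfl, rfl⟩
    · rintro T D₀ ⟨rfl, rfl⟩; exact .unionL a a1
    · rintro D₀ ⟨h', -⟩; injection h'
    · rintro N D₀ ⟨h', -⟩; injection h'
    · rintro TD TR D₀ ⟨h', -⟩; injection h'
    · rintro x T D₀ ⟨h', -⟩; injection h'
    · rintro TL TR D₀ ⟨h', -⟩; injection h'
    · rintro TL TR D₀ ⟨h', rfl⟩ C0 hL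
      injection h' with e1 e2; subst e1; exact ihL _ hL
    · rintro TL TR D₀ ⟨h', rfl⟩ C0 hR
      injection h' with e1 e2; subst e2; exact ihR _ hR
  have s11 : ∀ {C' DL} (DR : Contract), SubjSub Γ C' DL →
      (∀ C, SubjSub Γ C C' → SubjSub Γ C DL) →
      ∀ C, SubjSub Γ C C' → SubjSub Γ C (.union DL DR) :=
    fun DR _ ih C h => .unionR₁ DR (ih C h)
  have s12 : ∀ {C' DR} (DL : Contract), SubjSub Γ C' DR →
      (∀ C, SubjSub Γ C C' → SubjSub Γ C DR) →
      ∀ C, SubjSub Γ C C' → SubjSub Γ C (.union DL DR) :=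
    fun DL _ ih C h => .unionR₂ DL (ih C h)
  constructor
  · intro C' D h
    exact CtxSub.rec (Γ := Γ)
      (motive_1 := fun C' D _ => ∀ C, CtxSub Γ C C' → CtxSub Γ C D)
      (motive_2 := fun C' D _ => ∀ C, SubjSub Γ C C' → SubjSub Γ C D)
      c1 c2 c3 c4 c5 c6 c7 c8 c9 c10 s1 s2 s3 s4 s5 s6 s7 s8 s9 s10 s11 s12 h
  · intro C' D h
    exact SubjSub.rec (Γ := Γ)
      (motive_1 := fun C' D _ => ∀ C, CtxSub Γ C C' → CtxSub Γ C D)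
      (motive_2 := fun C' D _ => ∀ C, SubjSub Γ C C' → SubjSub Γ C D)
      c1 c2 c3 c4 c5 c6 c7 c8 c9 c10 s1 s2 s3 s4 s5 s6 s7 s8 s9 s10 s11 s12 h


/-- **Naive subcontracting ⊑* is a preorder** (Lemma 5): it is reflexive and
transitive, provided the predicate-implication relation ≤ of Γ is transitive. -/
theorem naiveSub_preorder (Γ : PredEnv)
    (hΓ : ∀ M N L, Γ M N → Γ N L → Γ M L) :
    (∀ C : Contract, NaiveSub Γ C C) ∧
    (∀ C C' D : Contract, NaiveSub Γ C C' → NaiveSub Γ C' D → NaiveSub Γ C D) := by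
  obtain ⟨ct, st⟩ := sub_trans Γ hΓ
  exact ⟨fun C => ⟨.refl C, .refl C⟩,
    fun C C' D h1 h2 => ⟨ct C' D h2.1 C h1.1, st C' D h2.2 C h1.2⟩⟩

end LambdaCon
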